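/- (Theorem 2, Case 1) Suppose 0 < h̲ < h̄, P_m > 0 and ε > 0. Let h† > 0 be the unique solution of the fixed-point equation h = −(180·b·L)/(π·ξ_L)·[1 − p_B(h)] (the unconstrained optimal height), and let h‡ > 0 be the unique solution of D(P_m, h) = 2ε². If h† ≤ h̲ and h‡ ≤ h̲, then (h̲, P_m) maximizes γ(P, h) over all (P, h) with 0 < P ≤ P_m, D(P, h) ≤ 2ε², and h̲ ≤ h ≤ h̄. -/

import Mathlib

/-- LoS probability for a UAV at height `h` directly above Willie, with Bob at
horizontal distance `L`. -/
noncomputable def pB (a b L h : ℝ) : ℝ :=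
  1 / (1 + a * Real.exp (-b * ((180 / Real.pi) * Real.arctan (h / L) - a)))

/-- Effective SNR at Bob in the vertical-UAV setting: `γ(P, h) = P·(L² + h²)^{ξ_L/2}·p_B(h)/σ_b²`. -/
noncomputable def γV (a b L ξL σb2 P h : ℝ) : ℝ :=
  P * (L ^ 2 + h ^ 2) ^ (ξL / 2) * pB a b L h / σb2

/-- KL divergence in the vertical-UAV setting, with `P̄ = P·(h^{ξ_L} + h^{ξ_N})`. -/
noncomputable def DV (ξL ξN σw2 : ℝ) (n : ℕ) (P h : ℝ) : ℝ :=
  ((n : ℝ) / 2) * (Real.log ((P * (h ^ ξL + h ^ ξN) + σw2) / σw2) -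
    P * (h ^ ξL + h ^ ξN) / (P * (h ^ ξL + h ^ ξN) + σw2))

/-!
The SNR factors as `γ(P, h) = P · g(h) / σ_b²` with the channel gain `g(h) = (L² + h²)^{ξ_L/2} p_B(h)`.
Since `p_B` is a logistic function of the elevation angle, `p_B' = (180/π) b L/(L² + h²) · p_B (1 − p_B)`,
so `g'(h)` has the sign of `ξ_L h + (180/π) b L (1 − p_B(h))`. This expression is strictly decreasing
and vanishes at the fixed point `h†`, hence `g` is antitone on `[h†, ∞)` and `h̲ ≥ h†` is the best
admissible height; with `P ≤ P_m` this gives the optimality of `(h̲, P_m)`. Feasibility: `D(P_m, ·)` is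
antitone in `h` (`P̄` decreases in `h` and `t ↦ ln(1 + t/σ) − t/(t + σ)` increases on `t ≥ 0`), so
`D(P_m, h̲) ≤ D(P_m, h‡) = 2ε²`.
-/

open Real Set

noncomputable def gainV (a b L ξL h : ℝ) : ℝ :=
  (L ^ 2 + h ^ 2) ^ (ξL / 2) * pB a b L h

lemma γV_eq_gainV (a b L ξL σb2 P h : ℝ) :
    γV a b L ξL σb2 P h = P * gainV a b L ξL h / σb2 := by
  rw [γV, gainV, mul_assoc]

section LoSProbability

variable {a b L : ℝ}

lemma pB_denom_pos (ha : 0 < a) (h : ℝ) :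
    0 < 1 + a * exp (-b * ((180 / π) * arctan (h / L) - a)) := by
  positivity

lemma pB_pos (ha : 0 < a) (h : ℝ) : 0 < pB a b L h :=
  one_div_pos.2 (pB_denom_pos ha h)

lemma pB_monotone (ha : 0 < a) (hb : 0 < b) (hL : 0 < L) : Monotone (pB a b L) := by
  intro x y hxy
  apply one_div_le_one_div_of_le (pB_denom_pos ha y)
  have harctan : arctan (x / L) ≤ arctan (y / L) := arctan_strictMono.monotone (by gcongr)
  have hexp : exp (-b * ((180 / π) * arctan (y / L) - a)) ≤
      exp (-b * ((180 / π) * arctan (x / L) - a)) := by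
    rw [exp_le_exp, neg_mul, neg_mul, neg_le_neg_iff]
    gcongr
  gcongr

lemma hasDerivAt_pB (ha : 0 < a) (hL : 0 < L) (x : ℝ) :
    HasDerivAt (pB a b L)
      (180 / π * b * L / (L ^ 2 + x ^ 2) * pB a b L x * (1 - pB a b L x)) x := by
  have hdiv : HasDerivAt (fun z : ℝ => z / L) (1 / L) x := by
    simpa using (hasDerivAt_id x).div_const L
  have hE := ((((hdiv.arctan).const_mul (180 / π)).sub_const a).const_mul (-b)).exp.const_mul a
  have hD := pB_denom_pos (b := b) (L := L) ha x
  have hinv := (hE.const_add 1).inv hD.ne'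
  have hfun : (fun y => 1 + a * exp (-b * ((180 / π) * arctan (y / L) - a)))⁻¹ = pB a b L := by
    funext y
    rw [pB, one_div, Pi.inv_apply]
  rw [hfun] at hinv
  refine hinv.congr_deriv ?_
  rw [pB]
  field_simp
  ring

end LoSProbability

section ChannelGain

variable {a b L : ℝ} (ξL : ℝ)

lemma gainV_nonneg (ha : 0 < a) (h : ℝ) : 0 ≤ gainV a b L ξL h :=
  mul_nonneg (rpow_nonneg (by positivity) _) (pB_pos ha h).le

lemma hasDerivAt_gainV (ha : 0 < a) (hL : 0 < L) (x : ℝ) :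
    HasDerivAt (gainV a b L ξL)
      ((L ^ 2 + x ^ 2) ^ (ξL / 2 - 1) * pB a b L x *
        (ξL * x + 180 / π * b * L * (1 - pB a b L x))) x := by
  have hD : 0 < L ^ 2 + x ^ 2 := by positivity
  have hdist : HasDerivAt (fun z : ℝ => (L ^ 2 + z ^ 2) ^ (ξL / 2))
      ((2 * x) * (ξL / 2) * (L ^ 2 + x ^ 2) ^ (ξL / 2 - 1)) x := by
    have hsq : HasDerivAt (fun z : ℝ => L ^ 2 + z ^ 2) (2 * x) x := by
      simpa using (hasDerivAt_pow 2 x).const_add (L ^ 2)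
    exact hsq.rpow_const (Or.inl hD.ne')
  refine (hdist.mul (hasDerivAt_pB ha hL x)).congr_deriv ?_
  rw [rpow_sub_one hD.ne']
  field_simp

lemma gainV_antitoneOn (ha : 0 < a) (hb : 0 < b) (hL : 0 < L) (hξL : ξL < 0) {hdag : ℝ}
    (hdag_eq : hdag = -(180 * b * L) / (π * ξL) * (1 - pB a b L hdag)) :
    AntitoneOn (gainV a b L ξL) (Ici hdag) := by
  have hzero : ξL * hdag + 180 / π * b * L * (1 - pB a b L hdag) = 0 := by
    have hξL0 := hξL.ne
    have h := hdag_eq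
    field_simp at h ⊢
    linear_combination h
  have hdiff : Differentiable ℝ (gainV a b L ξL) :=
    fun x => (hasDerivAt_gainV ξL ha hL x).differentiableAt
  refine antitoneOn_of_deriv_nonpos (convex_Ici hdag) hdiff.continuous.continuousOn
    hdiff.differentiableOn fun x hx => ?_
  rw [interior_Ici] at hx
  rw [(hasDerivAt_gainV ξL ha hL x).deriv]
  have hfactor : ξL * x + 180 / π * b * L * (1 - pB a b L x) ≤ 0 := by
    have hpB := pB_monotone ha hb hL (le_of_lt hx)
    have hξx : ξL * x ≤ ξL * hdag := mul_le_mul_of_nonpos_left hx.le hξL.le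
    have hc : 0 ≤ 180 / π * b * L := by positivity
    nlinarith
  exact mul_nonpos_of_nonneg_of_nonpos
    (mul_nonneg (rpow_nonneg (by positivity) _) (pB_pos ha x).le) hfactor

end ChannelGain

lemma log_div_sub_div_monotoneOn {σ : ℝ} (hσ : 0 < σ) :
    MonotoneOn (fun t => log ((t + σ) / σ) - t / (t + σ)) (Ici 0) := by
  intro s hs t ht hst
  simp only [mem_Ici] at hs ht
  have hsσ : 0 < s + σ := by linarith
  have htσ : 0 < t + σ := by linarith
  have hlog : log ((s + σ) / (t + σ)) ≤ (s + σ) / (t + σ) - 1 :=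
    log_le_sub_one_of_pos (div_pos hsσ htσ)
  rw [log_div hsσ.ne' htσ.ne'] at hlog
  simp only [log_div hsσ.ne' hσ.ne', log_div htσ.ne' hσ.ne']
  have hfrac : t / (t + σ) - s / (s + σ) ≤ 1 - (s + σ) / (t + σ) := by
    rw [div_sub_div _ _ htσ.ne' hsσ.ne', one_sub_div htσ.ne',
      div_le_div_iff₀ (by positivity) htσ]
    nlinarith [mul_nonneg (mul_nonneg (sub_nonneg.2 hst) htσ.le) hs]
  linarith

lemma DV_antitoneOn {ξL ξN σw2 P : ℝ} (n : ℕ) (hξL : ξL ≤ 0) (hξN : ξN ≤ 0) (hσw : 0 < σw2)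
    (hP : 0 ≤ P) : AntitoneOn (DV ξL ξN σw2 n P) (Ioi 0) := by
  intro h₁ h₁_pos h₂ h₂_pos hle
  have hpow : ∀ h : ℝ, 0 < h → 0 ≤ P * (h ^ ξL + h ^ ξN) := fun h hh => by positivity
  have hsnr : P * (h₂ ^ ξL + h₂ ^ ξN) ≤ P * (h₁ ^ ξL + h₁ ^ ξN) := by
    gcongr P * (?_ + ?_)
    · exact rpow_le_rpow_of_nonpos h₁_pos hle hξL
    · exact rpow_le_rpow_of_nonpos h₁_pos hle hξN
  exact mul_le_mul_of_nonneg_left (log_div_sub_div_monotoneOn hσw (hpow h₂ h₂_pos)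
    (hpow h₁ h₁_pos) hsnr) (by positivity)

theorem stmt_18_general (a b L ξL ξN σb2 σw2 Pm ε hlo hhi hdag hddag : ℝ) (n : ℕ)
    (ha : 0 < a) (hb : 0 < b) (hL : 0 < L) (hξL : ξL < 0) (hξN : ξN < 0)
    (hσb : 0 < σb2) (hσw : 0 < σw2)
    (hh' : hlo < hhi) (hPm : 0 < Pm)
    (hdag_eq : hdag = -(180 * b * L) / (Real.pi * ξL) * (1 - pB a b L hdag))
    (hddag_pos : 0 < hddag)
    (hddag_eq : DV ξL ξN σw2 n Pm hddag = 2 * ε ^ 2)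
    (hcase1 : hdag ≤ hlo) (hcase1' : hddag ≤ hlo) :
    (0 < Pm ∧ Pm ≤ Pm ∧ DV ξL ξN σw2 n Pm hlo ≤ 2 * ε ^ 2 ∧ hlo ≤ hlo ∧ hlo ≤ hhi) ∧
    (∀ P h : ℝ,
      (0 < P ∧ P ≤ Pm ∧ DV ξL ξN σw2 n P h ≤ 2 * ε ^ 2 ∧ hlo ≤ h ∧ h ≤ hhi) →
      γV a b L ξL σb2 P h ≤ γV a b L ξL σb2 Pm hlo) := by
  have hlo_pos : 0 < hlo := hddag_pos.trans_le hcase1'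
  refine ⟨⟨hPm, le_rfl, ?_, le_rfl, hh'.le⟩, ?_⟩
  · exact hddag_eq ▸ DV_antitoneOn n hξL.le hξN.le hσw hPm.le hddag_pos hlo_pos hcase1'
  · rintro P h ⟨-, hP_le, -, hlo_le, -⟩
    have hgain : gainV a b L ξL h ≤ gainV a b L ξL hlo :=
      gainV_antitoneOn ξL ha hb hL hξL hdag_eq hcase1 (hcase1.trans hlo_le) hlo_le
    rw [γV_eq_gainV, γV_eq_gainV]
    exact div_le_div_of_nonneg_right
      (mul_le_mul hP_le hgain (gainV_nonneg ξL ha h) hPm.le) hσb.le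

/-- Theorem 2, Case 1: if the unconstrained optimal height `h†` (the unique positive
solution of the fixed-point equation `h = −(180·b·L)/(π·ξ_L)·(1 − p_B(h))`) and the
unique positive solution `h‡` of `D(P_m, h) = 2ε²` both satisfy `h† ≤ h̲` and `h‡ ≤ h̲`,
then `(h̲, P_m)` is feasible and maximizes `γ(P, h)` over all `(P, h)` with
`0 < P ≤ P_m`, `D(P, h) ≤ 2ε²`, and `h̲ ≤ h ≤ h̄`. -/
theorem stmt_18 (a b L ξL ξN σb2 σw2 Pm ε hlo hhi hdag hddag : ℝ) (n : ℕ)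
    (ha : 0 < a) (hb : 0 < b) (hL : 0 < L) (hξL : ξL < 0) (hξN : ξN < 0)
    (hn : 1 ≤ n) (hσb : 0 < σb2) (hσw : 0 < σw2)
    (hh : 0 < hlo) (hh' : hlo < hhi) (hPm : 0 < Pm) (hε : 0 < ε)
    (hdag_pos : 0 < hdag)
    (hdag_eq : hdag = -(180 * b * L) / (Real.pi * ξL) * (1 - pB a b L hdag))
    (hdag_uniq : ∀ h : ℝ, 0 < h →
      h = -(180 * b * L) / (Real.pi * ξL) * (1 - pB a b L h) → h = hdag)
    (hddag_pos : 0 < hddag)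
    (hddag_eq : DV ξL ξN σw2 n Pm hddag = 2 * ε ^ 2)
    (hddag_uniq : ∀ h : ℝ, 0 < h → DV ξL ξN σw2 n Pm h = 2 * ε ^ 2 → h = hddag)
    (hcase1 : hdag ≤ hlo) (hcase1' : hddag ≤ hlo) :
    (0 < Pm ∧ Pm ≤ Pm ∧ DV ξL ξN σw2 n Pm hlo ≤ 2 * ε ^ 2 ∧ hlo ≤ hlo ∧ hlo ≤ hhi) ∧
    (∀ P h : ℝ,
      (0 < P ∧ P ≤ Pm ∧ DV ξL ξN σw2 n P h ≤ 2 * ε ^ 2 ∧ hlo ≤ h ∧ h ≤ hhi) →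
      γV a b L ξL σb2 P h ≤ γV a b L ξL σb2 Pm hlo) :=
  stmt_18_general a b L ξL ξN σb2 σw2 Pm ε hlo hhi hdag hddag n ha hb hL hξL hξN hσb hσw hh' hPm
    hdag_eq hddag_pos hddag_eq hcase1 hcase1'
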